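/- arXiv:math/0412096 — 4 statements merged into one kernel-verified Lean document; each statement's English description precedes it below -/
import Mathlib

section
/- For a C² real-valued function u on an almost complex manifold (M,J), a point p ∈ M, and a vector v ∈ T_pM, one has L^J(u)(p)(v) = Δ(u∘f)(0), where f is any J-holomorphic disc with f(0)=p and df(0)(∂/∂Re ζ)=v, and Δ is the Laplacian on ℂ. -/
noncomputable section
open Complex Metric
open Complex Metric

def Jstd (n : ℕ) : (Fin n → ℂ) →L[ℝ] (Fin n → ℂ) :=
  Complex.I • ContinuousLinearMap.id ℝ (Fin n → ℂ)

def mulI : ℂ →L[ℝ] ℂ := Complex.I • ContinuousLinearMap.id ℝ ℂ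

/-- The 1-form `J^* du : v ↦ du(Jv)`. -/
def oneForm {n : ℕ} (J : (Fin n → ℂ) → ((Fin n → ℂ) →L[ℝ] (Fin n → ℂ)))
    (u : (Fin n → ℂ) → ℝ) (Z : Fin n → ℂ) : (Fin n → ℂ) →L[ℝ] ℝ :=
  (fderiv ℝ u Z).comp (J Z)

/-- Levi form `L^J(u)(p)(v) = -d(J^* du)(X, JX)(p)` computed with the constant
vector field `X ≡ v` and `JX : Z ↦ J(Z)v`, using
`dω(X,Y) = X(ω(Y)) - Y(ω(X)) - ω([X,Y])`. -/
def leviForm {n : ℕ} (J : (Fin n → ℂ) → ((Fin n → ℂ) →L[ℝ] (Fin n → ℂ)))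
    (u : (Fin n → ℂ) → ℝ) (p v : Fin n → ℂ) : ℝ :=
  -(fderiv ℝ (fun Z => oneForm J u Z (J Z v)) p v
    - fderiv ℝ (fun Z => oneForm J u Z v) p (J p v)
    - oneForm J u p (fderiv ℝ (fun Z => J Z v) p v))

/-- A `J`-holomorphic disc: a smooth map of the unit disc with `df ∘ J_st = J ∘ df`. -/
def JHoloDisc {n : ℕ} (J : (Fin n → ℂ) → ((Fin n → ℂ) →L[ℝ] (Fin n → ℂ)))
    (f : ℂ → Fin n → ℂ) : Prop :=
  ContDiffOn ℝ (⊤ : ℕ∞) f (ball (0:ℂ) 1) ∧ ∀ ζ ∈ ball (0:ℂ) 1,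
    (fderiv ℝ f ζ).comp mulI = (J (f ζ)).comp (fderiv ℝ f ζ)


/-- The Laplacian `Δg(ζ)` of a function on `ℂ`. -/
def lap (g : ℂ → ℝ) (ζ : ℂ) : ℝ :=
  fderiv ℝ (fun t => fderiv ℝ g t 1) ζ 1
    + fderiv ℝ (fun t => fderiv ℝ g t Complex.I) ζ Complex.I

open Topology

private theorem fderiv_clm_apply_apply {E F G : Type*} [NormedAddCommGroup E] [NormedSpace ℝ E]
    [NormedAddCommGroup F] [NormedSpace ℝ F] [NormedAddCommGroup G] [NormedSpace ℝ G]
    {c : G → E →L[ℝ] F} {b : G → E} {x : G}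
    (hc : DifferentiableAt ℝ c x) (hb : DifferentiableAt ℝ b x) (w : G) :
    fderiv ℝ (fun y => c y (b y)) x w
      = fderiv ℝ c x w (b x) + c x (fderiv ℝ b x w) := by
  rw [fderiv_clm_apply hc hb, ContinuousLinearMap.add_apply, ContinuousLinearMap.comp_apply,
    ContinuousLinearMap.flip_apply, add_comm]

private theorem fderiv_clm_apply_const {E F G : Type*} [NormedAddCommGroup E] [NormedSpace ℝ E]
    [NormedAddCommGroup F] [NormedSpace ℝ F] [NormedAddCommGroup G] [NormedSpace ℝ G]
    {c : G → E →L[ℝ] F} {x : G}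
    (hc : DifferentiableAt ℝ c x) (b : E) (w : G) :
    fderiv ℝ (fun y => c y b) x w = fderiv ℝ c x w b := by
  rw [fderiv_clm_apply_apply hc (differentiableAt_const b) w]
  simp

/-- `L^J(u)(p)(v) = Δ(u∘f)(0)` for any `J`-holomorphic disc `f` with
`f(0) = p` and `df(0)(∂/∂Re ζ) = v`. -/
theorem stmt_2 (n : ℕ)
    (J : (Fin n → ℂ) → ((Fin n → ℂ) →L[ℝ] (Fin n → ℂ)))
    (hsmooth : ContDiff ℝ (⊤ : ℕ∞) J)
    (hACS : ∀ Z, (J Z).comp (J Z) = -ContinuousLinearMap.id ℝ (Fin n → ℂ))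
    (u : (Fin n → ℂ) → ℝ) (hu : ContDiff ℝ 2 u)
    (p v : Fin n → ℂ) (f : ℂ → Fin n → ℂ)
    (hf : JHoloDisc J f) (hf0 : f 0 = p) (hfv : fderiv ℝ f 0 1 = v) :
    leviForm J u p v = lap (u ∘ f) 0 := by
  classical
  obtain ⟨hfs, hfJ⟩ := hf
  have h0mem : (0:ℂ) ∈ ball (0:ℂ) 1 := by simp
  have hnb : ball (0:ℂ) 1 ∈ 𝓝 (0:ℂ) := isOpen_ball.mem_nhds h0mem
  have hfC : ContDiffAt ℝ 2 f 0 := (hfs.contDiffAt hnb).of_le (by exact WithTop.coe_le_coe.mpr le_top)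
  have hfd : ∀ᶠ t in 𝓝 (0:ℂ), DifferentiableAt ℝ f t := by
    filter_upwards [hnb] with t ht
    exact (hfs.contDiffAt (isOpen_ball.mem_nhds ht)).differentiableAt (by simp)
  have hfd0 : DifferentiableAt ℝ f 0 := hfC.differentiableAt two_ne_zero
  have hud : Differentiable ℝ u := hu.differentiable two_ne_zero
  have hAc : ContDiff ℝ 1 (fderiv ℝ u) := hu.fderiv_right (by norm_num)
  have hAd : ∀ x, DifferentiableAt ℝ (fderiv ℝ u) x := fun x => (hAc.differentiable one_ne_zero) x
  have hJd : ∀ x, DifferentiableAt ℝ J x := fun x => (hsmooth.differentiable (by simp)) x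
  have hFc : ContDiffAt ℝ 1 (fderiv ℝ f) 0 := hfC.fderiv_right (by norm_num)
  have hFd : DifferentiableAt ℝ (fderiv ℝ f) 0 := hFc.differentiableAt one_ne_zero
  have hJJ : ∀ Z w, J Z (J Z w) = -w := by
    intro Z w
    have := congrArg (fun T : (Fin n → ℂ) →L[ℝ] (Fin n → ℂ) => T w) (hACS Z)
    simpa using this
  -- value of df(0) on I
  have hFI : fderiv ℝ f 0 Complex.I = J p v := by
    have h := congrArg (fun T : ℂ →L[ℝ] (Fin n → ℂ) => T 1) (hfJ 0 h0mem)
    simp only [ContinuousLinearMap.comp_apply, mulI, ContinuousLinearMap.smul_apply,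
      ContinuousLinearMap.id_apply, smul_eq_mul, mul_one, hf0, hfv] at h
    exact h
  -- derivative of the holomorphy relation
  have hcdJf : DifferentiableAt ℝ (fun t => J (f t)) 0 := (hJd (f 0)).comp 0 hfd0
  have hcJf : ∀ w : ℂ, fderiv ℝ (fun t => J (f t)) 0 w = fderiv ℝ J p (fderiv ℝ f 0 w) := by
    intro w
    have h1 : fderiv ℝ (J ∘ f) 0 = (fderiv ℝ J (f 0)).comp (fderiv ℝ f 0) :=
      fderiv_comp 0 (hJd (f 0)) hfd0
    have h2 : fderiv ℝ (fun t => J (f t)) 0 = (fderiv ℝ J (f 0)).comp (fderiv ℝ f 0) := h1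
    rw [h2, ContinuousLinearMap.comp_apply, hf0]
  have hKrel : ∀ w : ℂ, fderiv ℝ (fderiv ℝ f) 0 w Complex.I
      = fderiv ℝ J p (fderiv ℝ f 0 w) v + J p (fderiv ℝ (fderiv ℝ f) 0 w 1) := by
    intro w
    have hevF : (fun t => fderiv ℝ f t Complex.I)
        =ᶠ[𝓝 (0:ℂ)] (fun t => J (f t) (fderiv ℝ f t 1)) := by
      filter_upwards [hnb] with t ht
      have h := congrArg (fun T : ℂ →L[ℝ] (Fin n → ℂ) => T 1) (hfJ t ht)
      simpa only [ContinuousLinearMap.comp_apply, mulI, ContinuousLinearMap.smul_apply,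
        ContinuousLinearMap.id_apply, smul_eq_mul, mul_one] using h
    have hbd : DifferentiableAt ℝ (fun t => fderiv ℝ f t 1) 0 :=
      hFd.clm_apply (differentiableAt_const _)
    have hL : fderiv ℝ (fun t => fderiv ℝ f t Complex.I) 0 w
        = fderiv ℝ (fderiv ℝ f) 0 w Complex.I := fderiv_clm_apply_const hFd _ w
    have hR : fderiv ℝ (fun t => J (f t) (fderiv ℝ f t 1)) 0 w
        = fderiv ℝ J p (fderiv ℝ f 0 w) v + J p (fderiv ℝ (fderiv ℝ f) 0 w 1) := by
      rw [fderiv_clm_apply_apply hcdJf hbd w, hcJf w, fderiv_clm_apply_const hFd _ w, hfv, hf0]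
    rw [← hL, hevF.fderiv_eq, hR]
  have hsymm : fderiv ℝ (fderiv ℝ f) 0 1 Complex.I = fderiv ℝ (fderiv ℝ f) 0 Complex.I 1 :=
    (hfC.isSymmSndFDerivAt (by simp)) 1 Complex.I
  -- the Laplacian side
  have lap1 : ∀ w : ℂ, fderiv ℝ (fun t => fderiv ℝ (u ∘ f) t w) 0 w
      = fderiv ℝ (fderiv ℝ u) p (fderiv ℝ f 0 w) (fderiv ℝ f 0 w)
        + fderiv ℝ u p (fderiv ℝ (fderiv ℝ f) 0 w w) := by
    intro w
    have hev : (fun t => fderiv ℝ (u ∘ f) t w)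
        =ᶠ[𝓝 (0:ℂ)] (fun t => fderiv ℝ u (f t) (fderiv ℝ f t w)) := by
      filter_upwards [hfd] with t ht
      have : fderiv ℝ (u ∘ f) t = (fderiv ℝ u (f t)).comp (fderiv ℝ f t) :=
        fderiv_comp t (hud (f t)) ht
      rw [this]; rfl
    have hcd : DifferentiableAt ℝ (fun t => fderiv ℝ u (f t)) 0 := (hAd (f 0)).comp 0 hfd0
    have hbd : DifferentiableAt ℝ (fun t => fderiv ℝ f t w) 0 :=
      hFd.clm_apply (differentiableAt_const _)
    have hc0 : fderiv ℝ (fun t => fderiv ℝ u (f t)) 0 w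
        = fderiv ℝ (fderiv ℝ u) p (fderiv ℝ f 0 w) := by
      have h1 : fderiv ℝ ((fderiv ℝ u) ∘ f) 0
          = (fderiv ℝ (fderiv ℝ u) (f 0)).comp (fderiv ℝ f 0) :=
        fderiv_comp 0 (hAd (f 0)) hfd0
      have h2 : fderiv ℝ (fun t => fderiv ℝ u (f t)) 0
          = (fderiv ℝ (fderiv ℝ u) (f 0)).comp (fderiv ℝ f 0) := h1
      rw [h2, ContinuousLinearMap.comp_apply, hf0]
    rw [hev.fderiv_eq, fderiv_clm_apply_apply hcd hbd w, hc0,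
      fderiv_clm_apply_const hFd _ w, hf0]
  -- the Levi form side
  have hterm1 : fderiv ℝ (fun Z => oneForm J u Z (J Z v)) p v
      = -(fderiv ℝ (fderiv ℝ u) p v v) := by
    have he : (fun Z => oneForm J u Z (J Z v)) = fun Z => fderiv ℝ u Z (-v) := by
      funext Z
      show fderiv ℝ u Z (J Z (J Z v)) = fderiv ℝ u Z (-v)
      rw [hJJ]
    rw [he, fderiv_clm_apply_const (hAd p) _ v, map_neg]
  have hJvd : DifferentiableAt ℝ (fun Z => J Z v) p := (hJd p).clm_apply (differentiableAt_const _)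
  have hterm2 : fderiv ℝ (fun Z => oneForm J u Z v) p (J p v)
      = fderiv ℝ (fderiv ℝ u) p (J p v) (J p v) + fderiv ℝ u p (fderiv ℝ J p (J p v) v) := by
    have he : (fun Z => oneForm J u Z v) = fun Z => fderiv ℝ u Z (J Z v) := rfl
    rw [he, fderiv_clm_apply_apply (hAd p) hJvd (J p v), fderiv_clm_apply_const (hJd p) _ _]
  have hterm3 : oneForm J u p (fderiv ℝ (fun Z => J Z v) p v)
      = fderiv ℝ u p (J p (fderiv ℝ J p v v)) := by
    show fderiv ℝ u p (J p (fderiv ℝ (fun Z => J Z v) p v)) = _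
    rw [fderiv_clm_apply_const (hJd p) _ _]
  -- put everything together
  have hKII : fderiv ℝ (fderiv ℝ f) 0 Complex.I Complex.I
      = fderiv ℝ J p (J p v) v + J p (fderiv ℝ J p v v)
        - fderiv ℝ (fderiv ℝ f) 0 1 1 := by
    have h1 := hKrel 1
    have h2 := hKrel Complex.I
    rw [hfv] at h1
    rw [hFI] at h2
    rw [h2, ← hsymm, h1, map_add, hJJ]
    abel
  rw [leviForm, hterm1, hterm2, hterm3]
  show _ = fderiv ℝ (fun t => fderiv ℝ (u ∘ f) t 1) 0 1
    + fderiv ℝ (fun t => fderiv ℝ (u ∘ f) t Complex.I) 0 Complex.I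
  rw [lap1 1, lap1 Complex.I, hfv, hFI, hKII, map_sub, map_add]
  ring
end
end

section
/- Let E be a strictly J-pseudoconvex real hypersurface in an almost complex manifold (M,J). Then in a neighborhood of each point p ∈ E, E admits a defining function that is strictly J-plurisubharmonic. -/
noncomputable section
open Complex Metric
open Complex Metric

section AuxLemmas

variable {n : ℕ} {J : (Fin n → ℂ) → ((Fin n → ℂ) →L[ℝ] (Fin n → ℂ))}

lemma JJ_eq (hACS : ∀ Z, (J Z).comp (J Z) = -ContinuousLinearMap.id ℝ (Fin n → ℂ))
    (Z : Fin n → ℂ) (v : Fin n → ℂ) : J Z (J Z v) = -v := by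
  have := congrArg (fun T : (Fin n → ℂ) →L[ℝ] (Fin n → ℂ) => T v) (hACS Z)
  simpa using this

/-- Closed formula for the Levi form in terms of first/second derivatives. -/
lemma leviForm_eq (hJ : ContDiff ℝ (⊤ : ℕ∞) J)
    (hACS : ∀ Z, (J Z).comp (J Z) = -ContinuousLinearMap.id ℝ (Fin n → ℂ))
    {u : (Fin n → ℂ) → ℝ} (hu : ContDiff ℝ (⊤ : ℕ∞) u) (p v : Fin n → ℂ) :
    leviForm J u p v =
      fderiv ℝ (fderiv ℝ u) p v v
      + fderiv ℝ (fderiv ℝ u) p (J p v) (J p v)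
      + fderiv ℝ u p (fderiv ℝ J p (J p v) v)
      + fderiv ℝ u p (J p (fderiv ℝ J p v v)) := by
  have hdu : ContDiff ℝ (⊤ : ℕ∞) (fderiv ℝ u) := hu.fderiv_right (by simp)
  have hD2 : HasFDerivAt (fderiv ℝ u) (fderiv ℝ (fderiv ℝ u) p) p :=
    (hdu.differentiable (by simp) p).hasFDerivAt
  have hDJ : HasFDerivAt J (fderiv ℝ J p) p :=
    (hJ.differentiable (by simp) p).hasFDerivAt
  have hJv : HasFDerivAt (fun Z => J Z v)
      ((J p).comp (0 : (Fin n → ℂ) →L[ℝ] (Fin n → ℂ)) + (fderiv ℝ J p).flip v) p :=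
    hDJ.clm_apply (hasFDerivAt_const v p)
  have eA : fderiv ℝ (fun Z => oneForm J u Z (J Z v)) p v
      = -(fderiv ℝ (fderiv ℝ u) p v v) := by
    have hfun : (fun Z => oneForm J u Z (J Z v)) = fun Z => -(fderiv ℝ u Z v) := by
      funext Z
      simp [oneForm, JJ_eq hACS]
    rw [hfun]
    have h1 : HasFDerivAt (fun Z => fderiv ℝ u Z v)
        ((fderiv ℝ u p).comp (0 : (Fin n → ℂ) →L[ℝ] (Fin n → ℂ))
          + (fderiv ℝ (fderiv ℝ u) p).flip v) p :=
      hD2.clm_apply (hasFDerivAt_const v p)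
    rw [HasFDerivAt.fderiv (f := fun Z => -(fderiv ℝ u Z v)) h1.neg]
    simp
  have eB : fderiv ℝ (fun Z => oneForm J u Z v) p (J p v)
      = fderiv ℝ u p (fderiv ℝ J p (J p v) v)
        + fderiv ℝ (fderiv ℝ u) p (J p v) (J p v) := by
    have hfun : (fun Z => oneForm J u Z v) = fun Z => fderiv ℝ u Z (J Z v) := by
      funext Z; simp [oneForm]
    rw [hfun]
    have h1 : HasFDerivAt (fun Z => fderiv ℝ u Z (J Z v))
        ((fderiv ℝ u p).comp ((J p).comp (0 : (Fin n → ℂ) →L[ℝ] (Fin n → ℂ))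
            + (fderiv ℝ J p).flip v)
          + (fderiv ℝ (fderiv ℝ u) p).flip (J p v)) p :=
      hD2.clm_apply hJv
    rw [h1.fderiv]
    simp
  have eC : oneForm J u p (fderiv ℝ (fun Z => J Z v) p v)
      = fderiv ℝ u p (J p (fderiv ℝ J p v v)) := by
    rw [hJv.fderiv]
    simp [oneForm]
  rw [leviForm, eA, eB, eC]
  ring

/-- Quadratic homogeneity of the Levi form in `v`. -/
lemma leviForm_smul (hJ : ContDiff ℝ (⊤ : ℕ∞) J)
    (hACS : ∀ Z, (J Z).comp (J Z) = -ContinuousLinearMap.id ℝ (Fin n → ℂ))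
    {u : (Fin n → ℂ) → ℝ} (hu : ContDiff ℝ (⊤ : ℕ∞) u) (p v : Fin n → ℂ) (t : ℝ) :
    leviForm J u p (t • v) = t ^ 2 * leviForm J u p v := by
  rw [leviForm_eq hJ hACS hu, leviForm_eq hJ hACS hu]
  simp only [map_smul, ContinuousLinearMap.smul_apply, smul_eq_mul]
  ring

lemma fderiv_exp_comp {r : (Fin n → ℂ) → ℝ} (hr : ContDiff ℝ (⊤ : ℕ∞) r) (C : ℝ) (Z : Fin n → ℂ) :
    fderiv ℝ (fun W => Real.exp (C * r W) - 1) Z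
      = (C * Real.exp (C * r Z)) • fderiv ℝ r Z := by
  have h1 : HasFDerivAt (fun W => C * r W) (C • fderiv ℝ r Z) Z :=
    (hr.differentiable (by simp) Z).hasFDerivAt.const_mul C
  have h2 := (h1.exp).sub_const 1
  rw [h2.fderiv, smul_smul]
  ring_nf

lemma fderiv2_exp_comp {r : (Fin n → ℂ) → ℝ} (hr : ContDiff ℝ (⊤ : ℕ∞) r) (C : ℝ) (p w : Fin n → ℂ) :
    fderiv ℝ (fderiv ℝ (fun W => Real.exp (C * r W) - 1)) p w
      = (C ^ 2 * Real.exp (C * r p) * fderiv ℝ r p w) • fderiv ℝ r p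
        + (C * Real.exp (C * r p)) • fderiv ℝ (fderiv ℝ r) p w := by
  have hfun : fderiv ℝ (fun W => Real.exp (C * r W) - 1)
      = fun Z => (C * Real.exp (C * r Z)) • fderiv ℝ r Z := by
    funext Z; exact fderiv_exp_comp hr C Z
  rw [hfun]
  have h1 : HasFDerivAt (fun W => C * r W) (C • fderiv ℝ r p) p :=
    (hr.differentiable (by simp) p).hasFDerivAt.const_mul C
  have hc : HasFDerivAt (fun Z => C * Real.exp (C * r Z))
      (C • (Real.exp (C * r p) • (C • fderiv ℝ r p))) p := h1.exp.const_mul C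
  have hf : HasFDerivAt (fderiv ℝ r) (fderiv ℝ (fderiv ℝ r) p) p :=
    ((hr.fderiv_right (m := (⊤ : ℕ∞)) (by simp)).differentiable (by simp) p).hasFDerivAt
  have h2 := hc.smul hf
  rw [HasFDerivAt.fderiv (f := fun Z => (C * Real.exp (C * r Z)) • fderiv ℝ r Z) h2]
  simp [ContinuousLinearMap.smulRight_apply, smul_smul]
  module

/-- Levi form transformation under `ρ = exp (C r) - 1`. -/
lemma leviForm_exp (hJ : ContDiff ℝ (⊤ : ℕ∞) J)
    (hACS : ∀ Z, (J Z).comp (J Z) = -ContinuousLinearMap.id ℝ (Fin n → ℂ))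
    {r : (Fin n → ℂ) → ℝ} (hr : ContDiff ℝ (⊤ : ℕ∞) r) (C : ℝ) (p v : Fin n → ℂ) :
    leviForm J (fun W => Real.exp (C * r W) - 1) p v
      = C * Real.exp (C * r p) * (leviForm J r p v
          + C * ((fderiv ℝ r p v) ^ 2 + (fderiv ℝ r p (J p v)) ^ 2)) := by
  have hrho : ContDiff ℝ (⊤ : ℕ∞) (fun W => Real.exp (C * r W) - 1) :=
    (Real.contDiff_exp.comp (contDiff_const.mul hr)).sub contDiff_const
  rw [leviForm_eq hJ hACS hrho, leviForm_eq hJ hACS hr]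
  simp only [fderiv2_exp_comp hr, fderiv_exp_comp hr]
  simp only [ContinuousLinearMap.add_apply, ContinuousLinearMap.smul_apply, smul_eq_mul]
  ring

end AuxLemmas

/-- a strictly `J`-pseudoconvex hypersurface `E = {r = 0}` (the Levi
form of `r` strictly positive on the holomorphic tangent spaces
`H_p^J(E) = {v : dr(p)v = 0 ∧ dr(p)(J(p)v) = 0}`) admits, near each of its points,
a defining function which is strictly `J`-plurisubharmonic. -/
theorem stmt_4 (n : ℕ)
    (J : (Fin n → ℂ) → ((Fin n → ℂ) →L[ℝ] (Fin n → ℂ)))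
    (hJs : ContDiff ℝ (⊤ : ℕ∞) J)
    (hACS : ∀ Z, (J Z).comp (J Z) = -ContinuousLinearMap.id ℝ (Fin n → ℂ))
    (r : (Fin n → ℂ) → ℝ) (hr : ContDiff ℝ (⊤ : ℕ∞) r)
    (hreg : ∀ Z, r Z = 0 → fderiv ℝ r Z ≠ 0)
    (hspc : ∀ Z, r Z = 0 → ∀ v : Fin n → ℂ, v ≠ 0 →
      fderiv ℝ r Z v = 0 → fderiv ℝ r Z (J Z v) = 0 → 0 < leviForm J r Z v)
    (p : Fin n → ℂ) (hp : r p = 0) :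
    ∃ U ∈ nhds p, ∃ ρ : (Fin n → ℂ) → ℝ, ContDiff ℝ 2 ρ ∧
      (∀ Z ∈ U, (r Z = 0 ↔ ρ Z = 0)) ∧
      (∀ Z ∈ U, fderiv ℝ ρ Z ≠ 0) ∧
      (∀ Z ∈ U, ∀ v : Fin n → ℂ, v ≠ 0 → 0 < leviForm J ρ Z v) := by
  classical
  let E := Fin n → ℂ
  -- continuous versions of the Levi form and the gradient quadratic form
  set F : E × E → ℝ := fun q => leviForm J r q.1 q.2 with hF
  set G : E × E → ℝ := fun q =>
    (fderiv ℝ r q.1 q.2) ^ 2 + (fderiv ℝ r q.1 (J q.1 q.2)) ^ 2 with hG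
  have hD1 : ContDiff ℝ (⊤ : ℕ∞) (fderiv ℝ r) := hr.fderiv_right (by simp)
  have hD2 : ContDiff ℝ (⊤ : ℕ∞) (fderiv ℝ (fderiv ℝ r)) := hD1.fderiv_right (by simp)
  have hDJ : ContDiff ℝ (⊤ : ℕ∞) (fderiv ℝ J) := hJs.fderiv_right (by simp)
  have hD1c : Continuous (fderiv ℝ r) := hD1.continuous
  have hD2c : Continuous (fderiv ℝ (fderiv ℝ r)) := hD2.continuous
  have hJc : Continuous J := hJs.continuous
  have hDJc : Continuous (fderiv ℝ J) := hDJ.continuous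
  have hFc : Continuous F := by
    have hFeq : F = fun q : E × E =>
        fderiv ℝ (fderiv ℝ r) q.1 q.2 q.2
        + fderiv ℝ (fderiv ℝ r) q.1 (J q.1 q.2) (J q.1 q.2)
        + fderiv ℝ r q.1 (fderiv ℝ J q.1 (J q.1 q.2) q.2)
        + fderiv ℝ r q.1 (J q.1 (fderiv ℝ J q.1 q.2 q.2)) := by
      funext q
      exact leviForm_eq hJs hACS hr q.1 q.2
    rw [hFeq]
    have c1 : Continuous fun q : (Fin n → ℂ) × (Fin n → ℂ) => fderiv ℝ (fderiv ℝ r) q.1 :=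
      hD2c.comp continuous_fst
    have c2 : Continuous fun q : (Fin n → ℂ) × (Fin n → ℂ) => fderiv ℝ r q.1 :=
      hD1c.comp continuous_fst
    have c3 : Continuous fun q : (Fin n → ℂ) × (Fin n → ℂ) => J q.1 := hJc.comp continuous_fst
    have c4 : Continuous fun q : (Fin n → ℂ) × (Fin n → ℂ) => fderiv ℝ J q.1 :=
      hDJc.comp continuous_fst
    have hJq : Continuous fun q : (Fin n → ℂ) × (Fin n → ℂ) => J q.1 q.2 :=
      c3.clm_apply continuous_snd
    have hDJq : Continuous fun q : (Fin n → ℂ) × (Fin n → ℂ) => fderiv ℝ J q.1 q.2 q.2 :=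
      (c4.clm_apply continuous_snd).clm_apply continuous_snd
    exact ((((c1.clm_apply continuous_snd).clm_apply continuous_snd).add
      ((c1.clm_apply hJq).clm_apply hJq)).add
      (c2.clm_apply ((c4.clm_apply hJq).clm_apply continuous_snd))).add
        (c2.clm_apply (c3.clm_apply hDJq))
  have hGc : Continuous G := by
    have h1 : Continuous fun q : E × E => fderiv ℝ r q.1 q.2 :=
      (hD1c.comp continuous_fst).clm_apply continuous_snd
    have h2 : Continuous fun q : E × E => fderiv ℝ r q.1 (J q.1 q.2) :=
      (hD1c.comp continuous_fst).clm_apply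
        ((hJc.comp continuous_fst).clm_apply continuous_snd)
    exact (h1.pow 2).add (h2.pow 2)
  have hGnn : ∀ q : E × E, 0 ≤ G q := fun q => by positivity
  -- choose the constant C using compactness of the unit sphere
  set S : Set E := sphere (0 : E) 1 with hS
  have hScpt : IsCompact S := isCompact_sphere 0 1
  have hfind : ∃ C : ℝ, 0 < C ∧ ∀ v ∈ S, 0 < F (p, v) + C * G (p, v) := by
    set K : Set E := {v ∈ S | F (p, v) ≤ 0} with hK
    have hKcpt : IsCompact K := by
      have : K = S ∩ (fun v => F (p, v)) ⁻¹' Set.Iic 0 := rfl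
      rw [this]
      exact hScpt.inter_right <|
        (isClosed_Iic.preimage (hFc.comp (Continuous.prodMk_right p)))
    rcases K.eq_empty_or_nonempty with hKe | hKne
    · refine ⟨1, one_pos, fun v hv => ?_⟩
      have hFv : 0 < F (p, v) := by
        by_contra h
        exact (Set.eq_empty_iff_forall_notMem.1 hKe v) ⟨hv, not_lt.1 h⟩
      have := hGnn (p, v)
      nlinarith
    · obtain ⟨v0, hv0K, hv0min⟩ :=
        hKcpt.exists_isMinOn hKne ((hGc.comp (Continuous.prodMk_right p)).continuousOn)
      obtain ⟨v1, hv1S, hv1min⟩ :=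
        hScpt.exists_isMinOn ⟨v0, hv0K.1⟩ ((hFc.comp (Continuous.prodMk_right p)).continuousOn)
      set δ : ℝ := G (p, v0) with hδ
      have hδpos : 0 < δ := by
        rcases lt_or_eq_of_le (hGnn (p, v0)) with h | h
        · exact h
        · exfalso
          have hv0S : v0 ∈ S := hv0K.1
          have hv0ne : v0 ≠ 0 := by
            intro h0
            rw [hS, mem_sphere_iff_norm] at hv0S
            simp [h0] at hv0S
          have ha : fderiv ℝ r p v0 = 0 ∧ fderiv ℝ r p (J p v0) = 0 := by
            have h' : (fderiv ℝ r p v0) ^ 2 + (fderiv ℝ r p (J p v0)) ^ 2 = 0 := h.symm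
            constructor <;> nlinarith [h', sq_nonneg (fderiv ℝ r p v0),
              sq_nonneg (fderiv ℝ r p (J p v0))]
          have := hspc p hp v0 hv0ne ha.1 ha.2
          have := hv0K.2
          rw [hF] at this
          linarith [hv0K.2]
      set m : ℝ := F (p, v1) with hm
      refine ⟨(1 + |m|) / δ, by positivity, fun v hv => ?_⟩
      by_cases hvK : v ∈ K
      · have h1 : δ ≤ G (p, v) := hv0min hvK
        have h2 : m ≤ F (p, v) := hv1min hv
        have h3 : (1 + |m|) / δ * δ = 1 + |m| := div_mul_cancel₀ _ (ne_of_gt hδpos)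
        have h4 : (1 + |m|) / δ * δ ≤ (1 + |m|) / δ * G (p, v) :=
          mul_le_mul_of_nonneg_left h1 (by positivity)
        have h5 : -|m| ≤ m := neg_abs_le m
        nlinarith
      · have hFv : 0 < F (p, v) := by
          by_contra h
          exact hvK ⟨hv, not_lt.1 h⟩
        have := hGnn (p, v)
        positivity
  obtain ⟨C, hCpos, hCS⟩ := hfind
  -- tube lemma around {p} × S
  set O : Set (E × E) := {q | 0 < F q + C * G q} with hO
  have hOopen : IsOpen O := isOpen_lt continuous_const (hFc.add (continuous_const.mul hGc))
  have hsub : ({p} : Set E) ×ˢ S ⊆ O := by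
    rintro ⟨Z, v⟩ ⟨hZ, hv⟩
    rcases hZ with rfl
    exact hCS v hv
  obtain ⟨U1, W1, hU1open, _, hpU1, hSW1, hUW⟩ :=
    generalized_tube_lemma isCompact_singleton hScpt hOopen hsub
  -- the neighborhood
  set U : Set E := U1 ∩ {Z | fderiv ℝ r Z ≠ 0} with hU
  have hUopen : IsOpen U :=
    hU1open.inter (isOpen_ne_fun hD1c continuous_const)
  have hpU : p ∈ U := ⟨hpU1 rfl, hreg p hp⟩
  refine ⟨U, hUopen.mem_nhds hpU, fun W => Real.exp (C * r W) - 1, ?_, ?_, ?_, ?_⟩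
  · exact ((Real.contDiff_exp.comp (contDiff_const.mul hr)).sub contDiff_const).of_le (WithTop.coe_le_coe.mpr le_top)
  · intro Z _
    constructor
    · intro h; simp [h]
    · intro h
      have h0 : Real.exp (C * r Z) - 1 = 0 := h
      have h1 : Real.exp (C * r Z) = 1 := by linarith
      rw [Real.exp_eq_one_iff] at h1
      rcases mul_eq_zero.1 h1 with h2 | h2
      · exact absurd h2 (ne_of_gt hCpos)
      · exact h2
  · intro Z hZ
    rw [fderiv_exp_comp hr]
    have h1 : (C * Real.exp (C * r Z)) ≠ 0 := by positivity
    have h2 : fderiv ℝ r Z ≠ 0 := hZ.2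
    simp [smul_eq_zero, h1, h2]
  · intro Z hZ v hv
    rw [leviForm_exp hJs hACS hr]
    have hnv : (0 : ℝ) < ‖v‖ := norm_pos_iff.mpr hv
    set v' : E := ‖v‖⁻¹ • v with hv'
    have hv'S : v' ∈ S := by
      rw [hS, mem_sphere_iff_norm, sub_zero, hv', norm_smul]
      simp [abs_of_pos (inv_pos.mpr hnv), inv_mul_cancel₀ (ne_of_gt hnv)]
    have hvv : v = ‖v‖ • v' := by
      rw [hv', smul_smul, mul_inv_cancel₀ (ne_of_gt hnv), one_smul]
    have hpos : 0 < F (Z, v') + C * G (Z, v') := hUW ⟨hZ.1, hSW1 hv'S⟩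
    have hLF : leviForm J r Z v = ‖v‖ ^ 2 * leviForm J r Z v' := by
      conv_lhs => rw [hvv]
      exact leviForm_smul hJs hACS hr Z v' ‖v‖
    have hGsc : (fderiv ℝ r Z v) ^ 2 + (fderiv ℝ r Z (J Z v)) ^ 2
        = ‖v‖ ^ 2 * ((fderiv ℝ r Z v') ^ 2 + (fderiv ℝ r Z (J Z v')) ^ 2) := by
      conv_lhs => rw [hvv]
      simp only [map_smul, smul_eq_mul]
      ring
    rw [hLF, hGsc]
    have hpos' : 0 < leviForm J r Z v' + C * ((fderiv ℝ r Z v') ^ 2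
        + (fderiv ℝ r Z (J Z v')) ^ 2) := hpos
    have hexp : 0 < Real.exp (C * r Z) := Real.exp_pos _
    calc (0:ℝ) < (C * Real.exp (C * r Z)) * (‖v‖ ^ 2 * (leviForm J r Z v'
          + C * ((fderiv ℝ r Z v') ^ 2 + (fderiv ℝ r Z (J Z v')) ^ 2))) :=
        mul_pos (mul_pos hCpos hexp) (mul_pos (pow_pos hnv 2) hpos')
      _ = C * Real.exp (C * r Z) * (‖v‖ ^ 2 * leviForm J r Z v'
          + C * (‖v‖ ^ 2 * ((fderiv ℝ r Z v') ^ 2 + (fderiv ℝ r Z (J Z v')) ^ 2))) := by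
        ring
end
end

section
/- Let J(Z) = J_st + L(Z) + O(|Z|²) be a smooth almost complex structure near 0 in ℂⁿ with ℝ-linear part L, coordinates (z,w) ∈ ℂᵐ × ℂ^{n−m}. Under the dilations Λ_δ(z,w) = (δ⁻¹z, δ^{−1/2}w), the structures J_δ = (Λ_δ)_*(J) converge as δ → 0 to J₀ = J_st + L₀(w), where in complex matrix notation L₀ has entries L⁰_{qj} = 0 for q=1,…,n, j=1,…,m and for q = n−m+1,…,n, j=1,…,n, while L⁰_{qj}(w) = L_{qj}(0,w) for q=1,…,m, j = n−m+1,…,n. -/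
noncomputable section
open Complex Metric

/-- Coordinates `Z = (z, w) ∈ ℂᵐ × ℂ^{n−m}` (here `p = n − m`). -/
abbrev Emp (m p : ℕ) := (Fin m → ℂ) × (Fin p → ℂ)

/-- The standard complex structure on `ℂᵐ × ℂᵖ`. -/
def JstE (m p : ℕ) : Emp m p →L[ℝ] Emp m p :=
  Complex.I • ContinuousLinearMap.id ℝ (Emp m p)

/-- The non-isotropic dilation `Λ_δ(z,w) = (δ⁻¹ z, δ^{−1/2} w)`. -/
def Lam (m p : ℕ) (δ : ℝ) : Emp m p →L[ℝ] Emp m p :=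
  ((δ⁻¹ : ℝ) • ContinuousLinearMap.id ℝ (Fin m → ℂ)).prodMap
    (((Real.sqrt δ)⁻¹ : ℝ) • ContinuousLinearMap.id ℝ (Fin p → ℂ))

/-- Its inverse `Λ_δ⁻¹(z,w) = (δ z, δ^{1/2} w)`. -/
def LamInv (m p : ℕ) (δ : ℝ) : Emp m p →L[ℝ] Emp m p :=
  ((δ : ℝ) • ContinuousLinearMap.id ℝ (Fin m → ℂ)).prodMap
    ((Real.sqrt δ : ℝ) • ContinuousLinearMap.id ℝ (Fin p → ℂ))

/-- `J_δ = (Λ_δ)_*(J)`. -/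
def Jdelta (m p : ℕ) (J : Emp m p → (Emp m p →L[ℝ] Emp m p)) (δ : ℝ)
    (Z : Emp m p) : Emp m p →L[ℝ] Emp m p :=
  (Lam m p δ).comp ((J (δ • Z.1, Real.sqrt δ • Z.2)).comp (LamInv m p δ))

/-- Projection on the `z`-part (embedded back into `ℂᵐ × ℂᵖ`). -/
def Pz (m p : ℕ) : Emp m p →L[ℝ] Emp m p :=
  (ContinuousLinearMap.inl ℝ (Fin m → ℂ) (Fin p → ℂ)).comp
    (ContinuousLinearMap.fst ℝ (Fin m → ℂ) (Fin p → ℂ))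

/-- Projection on the `w`-part (embedded back into `ℂᵐ × ℂᵖ`). -/
def Pw (m p : ℕ) : Emp m p →L[ℝ] Emp m p :=
  (ContinuousLinearMap.inr ℝ (Fin m → ℂ) (Fin p → ℂ)).comp
    (ContinuousLinearMap.snd ℝ (Fin m → ℂ) (Fin p → ℂ))

lemma conj_eq (m p : ℕ) (δ : ℝ) (hδ : 0 < δ) (T : Emp m p →L[ℝ] Emp m p) :
    (Lam m p δ).comp (T.comp (LamInv m p δ)) =
      (Pz m p).comp (T.comp (Pz m p)) +
      ((Real.sqrt δ)⁻¹) • (Pz m p).comp (T.comp (Pw m p)) +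
      (Real.sqrt δ) • (Pw m p).comp (T.comp (Pz m p)) +
      (Pw m p).comp (T.comp (Pw m p)) := by
  have hs : (0:ℝ) < Real.sqrt δ := Real.sqrt_pos.2 hδ
  have hss : Real.sqrt δ * Real.sqrt δ = δ := Real.mul_self_sqrt hδ.le
  refine ContinuousLinearMap.ext fun v => ?_
  have hv : (LamInv m p δ) v = δ • ((v.1, 0) : Emp m p) + Real.sqrt δ • ((0, v.2) : Emp m p) := by
    simp [LamInv, Prod.ext_iff]
  have key : ∀ u : Emp m p, (Lam m p δ) u = (δ⁻¹ • u.1, (Real.sqrt δ)⁻¹ • u.2) := by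
    intro u; simp [Lam, Prod.ext_iff]
  simp only [ContinuousLinearMap.comp_apply, hv, map_add, map_smul, key]
  have h3 : ∀ u : Emp m p, (Pz m p) u = ((u.1, 0) : Emp m p) := fun u => by simp [Pz]
  have h4 : ∀ u : Emp m p, (Pw m p) u = ((0, u.2) : Emp m p) := fun u => by simp [Pw]
  simp only [ContinuousLinearMap.add_apply, ContinuousLinearMap.smul_apply,
    ContinuousLinearMap.comp_apply, h3, h4]
  refine Prod.ext ?_ ?_
  · show δ⁻¹ • (δ • (T (v.1, 0)) + Real.sqrt δ • (T (0, v.2))).1 = _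
    simp only [Prod.fst_add, Prod.smul_fst, Prod.mk_add_mk, Prod.smul_mk, smul_add, smul_smul]
    rw [inv_mul_cancel₀ hδ.ne']
    have : δ⁻¹ * Real.sqrt δ = (Real.sqrt δ)⁻¹ := by
      field_simp
      rw [Real.sq_sqrt hδ.le]
    rw [this]; simp
  · show (Real.sqrt δ)⁻¹ • (δ • (T (v.1, 0)) + Real.sqrt δ • (T (0, v.2))).2 = _
    simp only [Prod.snd_add, Prod.smul_snd, Prod.mk_add_mk, Prod.smul_mk, smul_add, smul_smul]
    rw [inv_mul_cancel₀ hs.ne']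
    have : (Real.sqrt δ)⁻¹ * δ = Real.sqrt δ := by
      field_simp
      rw [Real.sq_sqrt hδ.le]
    rw [this]; simp [add_comm]

lemma normPz (m p : ℕ) : ‖Pz m p‖ ≤ 1 := by
  refine ContinuousLinearMap.opNorm_le_bound _ zero_le_one fun v => ?_
  have : (Pz m p) v = ((v.1, 0) : Emp m p) := by simp [Pz]
  rw [this, one_mul]
  simp [Prod.norm_def, le_max_iff]

lemma normPw (m p : ℕ) : ‖Pw m p‖ ≤ 1 := by
  refine ContinuousLinearMap.opNorm_le_bound _ zero_le_one fun v => ?_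
  have : (Pw m p) v = ((0, v.2) : Emp m p) := by simp [Pw]
  rw [this, one_mul]
  simp [Prod.norm_def, le_max_iff]

lemma normPTP (m p : ℕ) (P Q T : Emp m p →L[ℝ] Emp m p) (hP : ‖P‖ ≤ 1) (hQ : ‖Q‖ ≤ 1) :
    ‖P.comp (T.comp Q)‖ ≤ ‖T‖ := by
  calc ‖P.comp (T.comp Q)‖ ≤ ‖P‖ * ‖T.comp Q‖ := ContinuousLinearMap.opNorm_comp_le _ _
    _ ≤ 1 * (‖T‖ * ‖Q‖) := by
        gcongr
        exact ContinuousLinearMap.opNorm_comp_le _ _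
    _ ≤ 1 * (‖T‖ * 1) := by gcongr
    _ = ‖T‖ := by ring

lemma norm_conj_le (m p : ℕ) (δ : ℝ) (hδ : 0 < δ) (hδ1 : δ ≤ 1)
    (T : Emp m p →L[ℝ] Emp m p) :
    ‖(Lam m p δ).comp (T.comp (LamInv m p δ))‖ ≤ 4 * (Real.sqrt δ)⁻¹ * ‖T‖ := by
  have hs : (0:ℝ) < Real.sqrt δ := Real.sqrt_pos.2 hδ
  have hs1 : Real.sqrt δ ≤ 1 := by
    rw [show (1:ℝ) = Real.sqrt 1 by simp]; exact Real.sqrt_le_sqrt hδ1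
  have hinv : 1 ≤ (Real.sqrt δ)⁻¹ := by nlinarith [inv_pos.2 hs, mul_inv_cancel₀ hs.ne']
  rw [conj_eq m p δ hδ T]
  have b1 := normPTP m p _ _ T (normPz m p) (normPz m p)
  have b2 := normPTP m p _ _ T (normPz m p) (normPw m p)
  have b3 := normPTP m p _ _ T (normPw m p) (normPz m p)
  have b4 := normPTP m p _ _ T (normPw m p) (normPw m p)
  have hT : (0:ℝ) ≤ ‖T‖ := norm_nonneg _
  calc ‖_ + _ + _ + _‖ ≤ ‖(Pz m p).comp (T.comp (Pz m p)) +
        (Real.sqrt δ)⁻¹ • (Pz m p).comp (T.comp (Pw m p)) +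
        (Real.sqrt δ) • (Pw m p).comp (T.comp (Pz m p))‖ +
        ‖(Pw m p).comp (T.comp (Pw m p))‖ := norm_add_le _ _
    _ ≤ (‖(Pz m p).comp (T.comp (Pz m p)) +
        (Real.sqrt δ)⁻¹ • (Pz m p).comp (T.comp (Pw m p))‖ +
        ‖(Real.sqrt δ) • (Pw m p).comp (T.comp (Pz m p))‖) +
        ‖(Pw m p).comp (T.comp (Pw m p))‖ := by gcongr; exact norm_add_le _ _
    _ ≤ ((‖(Pz m p).comp (T.comp (Pz m p))‖ +
        ‖(Real.sqrt δ)⁻¹ • (Pz m p).comp (T.comp (Pw m p))‖) +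
        ‖(Real.sqrt δ) • (Pw m p).comp (T.comp (Pz m p))‖) +
        ‖(Pw m p).comp (T.comp (Pw m p))‖ := by gcongr; exact norm_add_le _ _
    _ ≤ ((‖T‖ + (Real.sqrt δ)⁻¹ * ‖T‖) + Real.sqrt δ * ‖T‖) + ‖T‖ := by
        have c2 : ‖(Real.sqrt δ)⁻¹ • (Pz m p).comp (T.comp (Pw m p))‖ ≤ (Real.sqrt δ)⁻¹ * ‖T‖ := by
          refine le_trans (ContinuousLinearMap.opNorm_smul_le _ _) ?_
          rw [Real.norm_eq_abs, abs_of_pos (inv_pos.2 hs)]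
          exact mul_le_mul_of_nonneg_left b2 (inv_pos.2 hs).le
        have c3 : ‖(Real.sqrt δ) • (Pw m p).comp (T.comp (Pz m p))‖ ≤ (Real.sqrt δ) * ‖T‖ := by
          refine le_trans (ContinuousLinearMap.opNorm_smul_le _ _) ?_
          rw [Real.norm_eq_abs, abs_of_pos hs]
          exact mul_le_mul_of_nonneg_left b3 hs.le
        gcongr <;> first | exact b1 | exact c2 | exact c3 | exact b4
    _ ≤ (((Real.sqrt δ)⁻¹ * ‖T‖ + (Real.sqrt δ)⁻¹ * ‖T‖) + (Real.sqrt δ)⁻¹ * ‖T‖) +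
        (Real.sqrt δ)⁻¹ * ‖T‖ := by
        gcongr
        · nlinarith
        · exact hs1.trans hinv
        · nlinarith
    _ = 4 * (Real.sqrt δ)⁻¹ * ‖T‖ := by ring

lemma conj_Jst (m p : ℕ) (δ : ℝ) (hδ : 0 < δ) :
    (Lam m p δ).comp ((JstE m p).comp (LamInv m p δ)) = JstE m p := by
  have hs : (0:ℝ) < Real.sqrt δ := Real.sqrt_pos.2 hδ
  refine ContinuousLinearMap.ext fun v => ?_
  have key : ∀ u : Emp m p, (Lam m p δ) u = (δ⁻¹ • u.1, (Real.sqrt δ)⁻¹ • u.2) := by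
    intro u; simp [Lam, Prod.ext_iff]
  have key2 : (LamInv m p δ) v = (δ • v.1, Real.sqrt δ • v.2) := by
    simp [LamInv, Prod.ext_iff]
  have keyJ : ∀ u : Emp m p, (JstE m p) u = (Complex.I • u.1, Complex.I • u.2) := by
    intro u; simp [JstE, Prod.ext_iff]
  simp only [ContinuousLinearMap.comp_apply, key2, keyJ, key]
  have e1 : ∀ (c : ℝ) (x : Fin m → ℂ), c ≠ 0 → c⁻¹ • Complex.I • c • x = Complex.I • x := by
    intro c x hc; rw [smul_comm Complex.I c, smul_smul, inv_mul_cancel₀ hc, one_smul]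
  have e2 : ∀ (c : ℝ) (x : Fin p → ℂ), c ≠ 0 → c⁻¹ • Complex.I • c • x = Complex.I • x := by
    intro c x hc; rw [smul_comm Complex.I c, smul_smul, inv_mul_cancel₀ hc, one_smul]
  refine Prod.ext ?_ ?_
  · exact e1 δ v.1 hδ.ne'
  · exact e2 (Real.sqrt δ) v.2 hs.ne'

set_option maxHeartbeats 1000000 in
/-- for `J(Z) = J_st + L(Z) + O(|Z|²)` with `L` `ℝ`-linear in `Z` and
anti-linear with respect to `J_st`, the dilated structures `J_δ = (Λ_δ)_*(J)`
converge on compact sets, as `δ → 0`, to `J₀ = J_st + L₀(w)`, where `L₀(w)` is the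
block of `L(0,w)` with nonzero entries exactly `L⁰_{qj}(w) = L_{qj}(0,w)` for the
`z`-rows `q = 1,…,m` and `w`-columns `j = n−m+1,…,n` (i.e. `L₀(w) = P_z ∘ L(0,w) ∘ P_w`). -/
theorem stmt_16 (m p : ℕ)
    (J L : Emp m p → (Emp m p →L[ℝ] Emp m p))
    (hJs : ContDiff ℝ (⊤ : ℕ∞) J)
    (hACS : ∀ Z, (J Z).comp (J Z) = -ContinuousLinearMap.id ℝ (Emp m p))
    (hJ0 : J 0 = JstE m p)
    (hLlin : IsLinearMap ℝ L)
    (hLanti : ∀ Z, (L Z).comp (JstE m p) = -((JstE m p).comp (L Z)))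
    (hTaylor : ∃ C : ℝ, ∀ Z : Emp m p, ‖Z‖ ≤ 1 →
      ‖J Z - JstE m p - L Z‖ ≤ C * ‖Z‖^2) :
    ∀ K : Set (Emp m p), IsCompact K → ∀ ε > 0, ∃ δ₀ > 0,
      ∀ δ : ℝ, 0 < δ → δ < δ₀ → ∀ Z ∈ K,
        ‖Jdelta m p J δ Z -
          (JstE m p + (Pz m p).comp ((L ((0 : Fin m → ℂ), Z.2)).comp (Pw m p)))‖
            ≤ ε := by
  obtain ⟨C, hC⟩ := hTaylor
  obtain ⟨CL, hCL0, hLc⟩ : ∃ CL : ℝ, 0 ≤ CL ∧ ∀ X : Emp m p, ‖L X‖ ≤ CL * ‖X‖ := by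
    refine ⟨‖LinearMap.toContinuousLinearMap (IsLinearMap.mk' L hLlin)‖,
      ContinuousLinearMap.opNorm_nonneg _, fun X => ?_⟩
    have h2 := (LinearMap.toContinuousLinearMap (IsLinearMap.mk' L hLlin)).le_opNorm X
    have h1 : (LinearMap.toContinuousLinearMap (IsLinearMap.mk' L hLlin)) X = L X := rfl
    rwa [h1] at h2
  obtain ⟨C', hC'0, hC'⟩ : ∃ C' : ℝ, 0 ≤ C' ∧ ∀ X : Emp m p, ‖X‖ ≤ 1 →
      ‖J X - JstE m p - L X‖ ≤ C' * ‖X‖^2 := by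
    refine ⟨max C 0, le_max_right _ _, fun X hX => ?_⟩
    exact (hC X hX).trans (by have := sq_nonneg ‖X‖; nlinarith [le_max_left C (0:ℝ)])
  intro K hK ε hε
  obtain ⟨M0, hM0⟩ := hK.isBounded.subset_closedBall 0
  obtain ⟨M, hM1, hM0⟩ : ∃ M : ℝ, 1 ≤ M ∧ K ⊆ closedBall 0 M :=
    ⟨max M0 1, le_max_right _ _, hM0.trans (closedBall_subset_closedBall (le_max_left _ _))⟩
  have hM0' : (0:ℝ) < M := lt_of_lt_of_le one_pos hM1
  have hMK : ∀ Z ∈ K, ‖Z‖ ≤ M := by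
    intro Z hZ
    have := hM0 hZ
    rwa [mem_closedBall_zero_iff] at this
  set B : ℝ := 7 * CL * M + 4 * C' * M ^ 2 + 1 with hB_def
  have hB : (0:ℝ) < B := by positivity
  refine ⟨min ((M⁻¹) ^ 2) ((ε / B) ^ 2), by positivity, fun δ hδpos hδlt Z hZ => ?_⟩
  have hδM : δ < (M⁻¹) ^ 2 := lt_of_lt_of_le hδlt (min_le_left _ _)
  have hδε : δ < (ε / B) ^ 2 := lt_of_lt_of_le hδlt (min_le_right _ _)
  set s : ℝ := Real.sqrt δ with hs_def
  have hs : (0:ℝ) < s := Real.sqrt_pos.2 hδpos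
  have hss : s * s = δ := Real.mul_self_sqrt hδpos.le
  have hsM : s ≤ M⁻¹ := by
    rw [hs_def]
    calc Real.sqrt δ ≤ Real.sqrt ((M⁻¹)^2) := Real.sqrt_le_sqrt hδM.le
      _ = M⁻¹ := Real.sqrt_sq (by positivity)
  have hsε : s ≤ ε / B := by
    rw [hs_def]
    calc Real.sqrt δ ≤ Real.sqrt ((ε / B)^2) := Real.sqrt_le_sqrt hδε.le
      _ = ε / B := Real.sqrt_sq (by positivity)
  have hMinv : M⁻¹ ≤ 1 := by
    nlinarith [mul_inv_cancel₀ (lt_of_lt_of_le one_pos hM1).ne', inv_pos.2 (lt_of_lt_of_le one_pos hM1)]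
  have hs1 : s ≤ 1 := hsM.trans hMinv
  have hδ1 : δ ≤ 1 := by nlinarith
  have hsM1 : s * M ≤ 1 := by
    calc s * M ≤ M⁻¹ * M := by gcongr
      _ = 1 := inv_mul_cancel₀ hM0'.ne'
  have hZM : ‖Z‖ ≤ M := hMK Z hZ
  have hZ1 : ‖Z.1‖ ≤ M := le_trans (by rw [Prod.norm_def]; exact le_max_left _ _) hZM
  have hZ2 : ‖Z.2‖ ≤ M := le_trans (by rw [Prod.norm_def]; exact le_max_right _ _) hZM
  set W : Emp m p := (δ • Z.1, s • Z.2) with hW_def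
  have hWle : ‖W‖ ≤ s * M := by
    rw [hW_def, Prod.norm_def]
    refine max_le ?_ ?_
    · rw [norm_smul, Real.norm_eq_abs, abs_of_pos hδpos]
      nlinarith [norm_nonneg Z.1, hss, hs1, hZ1, hs.le]
    · rw [norm_smul, Real.norm_eq_abs, abs_of_pos hs]
      exact mul_le_mul_of_nonneg_left hZ2 hs.le
  have hW1 : ‖W‖ ≤ 1 := hWle.trans hsM1
  set L1 : Emp m p →L[ℝ] Emp m p := L (Z.1, 0) with hL1_def
  set L2 : Emp m p →L[ℝ] Emp m p := L ((0 : Fin m → ℂ), Z.2) with hL2_def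
  set RR : Emp m p →L[ℝ] Emp m p := J W - JstE m p - L W with hRR_def
  have hL1n : ‖L1‖ ≤ CL * M := by
    rw [hL1_def]
    calc ‖L (Z.1, 0)‖ ≤ CL * ‖((Z.1, 0) : Emp m p)‖ := hLc _
      _ ≤ CL * M := by
          gcongr
          rw [Prod.norm_def]
          exact max_le hZ1 (by simpa using hM0'.le)
  have hL2n : ‖L2‖ ≤ CL * M := by
    rw [hL2_def]
    calc ‖L ((0 : Fin m → ℂ), Z.2)‖ ≤ CL * ‖(((0 : Fin m → ℂ), Z.2) : Emp m p)‖ := hLc _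
      _ ≤ CL * M := by
          gcongr
          rw [Prod.norm_def]
          exact max_le (by simpa using hM0'.le) hZ2
  have hRRn : ‖RR‖ ≤ C' * (s * M) ^ 2 := by
    rw [hRR_def]
    calc ‖J W - JstE m p - L W‖ ≤ C' * ‖W‖ ^ 2 := hC' W hW1
      _ ≤ C' * (s * M) ^ 2 := by gcongr
  have hLW : L W = δ • L1 + s • L2 := by
    have hWsplit : W = δ • ((Z.1, 0) : Emp m p) + s • (((0 : Fin m → ℂ), Z.2) : Emp m p) := by
      rw [hW_def]; simp [Prod.ext_iff]
    rw [hWsplit, hLlin.map_add, hLlin.map_smul, hLlin.map_smul, hL1_def, hL2_def]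
  have hJW : J W = JstE m p + (δ • L1 + s • L2) + RR := by
    rw [hRR_def, ← hLW]; abel
  have hexp : Jdelta m p J δ Z =
      JstE m p + δ • (Lam m p δ).comp (L1.comp (LamInv m p δ))
        + s • (Lam m p δ).comp (L2.comp (LamInv m p δ))
        + (Lam m p δ).comp (RR.comp (LamInv m p δ)) := by
    have : Jdelta m p J δ Z = (Lam m p δ).comp ((J W).comp (LamInv m p δ)) := rfl
    rw [this, hJW]
    simp only [ContinuousLinearMap.add_comp, ContinuousLinearMap.comp_add,
      ContinuousLinearMap.smul_comp, ContinuousLinearMap.comp_smul]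
    rw [conj_Jst m p δ hδpos]
    abel
  have hkey : Jdelta m p J δ Z -
      (JstE m p + (Pz m p).comp ((L ((0 : Fin m → ℂ), Z.2)).comp (Pw m p))) =
      δ • (Lam m p δ).comp (L1.comp (LamInv m p δ))
        + s • (Pz m p).comp (L2.comp (Pz m p))
        + (s * s) • (Pw m p).comp (L2.comp (Pz m p))
        + s • (Pw m p).comp (L2.comp (Pw m p))
        + (Lam m p δ).comp (RR.comp (LamInv m p δ)) := by
    rw [hexp, conj_eq m p δ hδpos L2, ← hL2_def]
    simp only [← hs_def, smul_add, smul_smul, mul_inv_cancel₀ hs.ne', one_smul]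
    abel
  rw [hkey]
  have n1 : ‖δ • (Lam m p δ).comp (L1.comp (LamInv m p δ))‖ ≤ 4 * s * (CL * M) := by
    refine le_trans (ContinuousLinearMap.opNorm_smul_le _ _) ?_
    rw [Real.norm_eq_abs, abs_of_pos hδpos]
    calc δ * ‖(Lam m p δ).comp (L1.comp (LamInv m p δ))‖
        ≤ δ * (4 * s⁻¹ * ‖L1‖) := mul_le_mul_of_nonneg_left (norm_conj_le m p δ hδpos hδ1 L1) hδpos.le
      _ ≤ δ * (4 * s⁻¹ * (CL * M)) := by gcongr
      _ = 4 * s * (CL * M) := by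
          rw [← hss]; field_simp
  have n2 : ‖s • (Pz m p).comp (L2.comp (Pz m p))‖ ≤ s * (CL * M) := by
    refine le_trans (ContinuousLinearMap.opNorm_smul_le _ _) ?_
    rw [Real.norm_eq_abs, abs_of_pos hs]
    exact mul_le_mul_of_nonneg_left ((normPTP m p _ _ L2 (normPz m p) (normPz m p)).trans hL2n) hs.le
  have n3 : ‖(s * s) • (Pw m p).comp (L2.comp (Pz m p))‖ ≤ s * s * (CL * M) := by
    refine le_trans (ContinuousLinearMap.opNorm_smul_le _ _) ?_
    rw [Real.norm_eq_abs, abs_of_pos (mul_pos hs hs)]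
    exact mul_le_mul_of_nonneg_left ((normPTP m p _ _ L2 (normPw m p) (normPz m p)).trans hL2n)
      (mul_pos hs hs).le
  have n4 : ‖s • (Pw m p).comp (L2.comp (Pw m p))‖ ≤ s * (CL * M) := by
    refine le_trans (ContinuousLinearMap.opNorm_smul_le _ _) ?_
    rw [Real.norm_eq_abs, abs_of_pos hs]
    exact mul_le_mul_of_nonneg_left ((normPTP m p _ _ L2 (normPw m p) (normPw m p)).trans hL2n) hs.le
  have n5 : ‖(Lam m p δ).comp (RR.comp (LamInv m p δ))‖ ≤ 4 * C' * s * M ^ 2 := by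
    calc ‖(Lam m p δ).comp (RR.comp (LamInv m p δ))‖
        ≤ 4 * s⁻¹ * ‖RR‖ := norm_conj_le m p δ hδpos hδ1 RR
      _ ≤ 4 * s⁻¹ * (C' * (s * M) ^ 2) := by gcongr
      _ = 4 * C' * s * M ^ 2 := by field_simp
  have hsum : ‖δ • (Lam m p δ).comp (L1.comp (LamInv m p δ))
        + s • (Pz m p).comp (L2.comp (Pz m p))
        + (s * s) • (Pw m p).comp (L2.comp (Pz m p))
        + s • (Pw m p).comp (L2.comp (Pw m p))
        + (Lam m p δ).comp (RR.comp (LamInv m p δ))‖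
      ≤ 4 * s * (CL * M) + s * (CL * M) + s * s * (CL * M) + s * (CL * M)
        + 4 * C' * s * M ^ 2 := by
    exact le_trans (norm_add_le _ _) (add_le_add (le_trans (norm_add_le _ _)
      (add_le_add (le_trans (norm_add_le _ _) (add_le_add (le_trans (norm_add_le _ _)
        (add_le_add n1 n2)) n3)) n4)) n5)
  refine hsum.trans ?_
  have hsB : s * B ≤ ε := by
    calc s * B ≤ (ε / B) * B := by gcongr
      _ = ε := div_mul_cancel₀ ε hB.ne'
  calc 4 * s * (CL * M) + s * (CL * M) + s * s * (CL * M) + s * (CL * M) + 4 * C' * s * M ^ 2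
      ≤ s * B := by rw [hB_def]; nlinarith [mul_nonneg hCL0 hM0'.le, mul_nonneg hs.le (mul_nonneg hCL0 hM0'.le)]
    _ ≤ ε := hsB
end
end

section
/- Consider the family of holomorphic discs attached to the quadric E₀' = {Re z_j = 0, j=1,…,n−2; 2Re z_{n−1} = |w|²} in ℂⁿ given by z_j(ζ) = iy_j (j ≤ n−2), z_{n−1}(ζ) = (1/2)(cc̄ + t²(λ²+1)/(1+λ)²) + tλc̄/(1+λ) + iy_{n−1} + (tc̄/(1+λ) + t²λ/(1+λ)²)ζ, w(ζ) = c + t(λ+ζ)/(1+λ). Then: (i) each disc maps bΔ into E₀'; (ii) for any t > 0, lim_{λ→1} f(t,λ,y,c)(−λ) = (iy₁,…,iy_{n−2}, (1/2)cc̄ + iy_{n−1}, c) ∈ E₀'; (iii) for fixed t > 0, the differential of (λ,y,c) ↦ f(t,λ,y,c)(−λ) at (1,0,0) has rank n+2. -/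
noncomputable section
open Complex Metric

/-- The Boggess–Pitts family of holomorphic Bishop discs attached to the quadric
`E₀' = {Re z_j = 0 (j ≤ n−2), 2 Re z_{n−1} = |w|²}`; here the `z`-coordinates are
indexed by `Fin (m+1)` with `m = n − 2`, and `w ∈ ℂ`. -/
def bdisc (m : ℕ) (t lam : ℝ) (y : Fin (m+1) → ℝ) (c : ℂ) (ζ : ℂ) :
    (Fin (m+1) → ℂ) × ℂ :=
  (fun j => if (j : ℕ) < m then Complex.I * (y j)
    else (1/2 : ℂ) * (c * (starRingEnd ℂ) c
        + ((t:ℂ)^2 * ((lam:ℂ)^2 + 1)) / (1 + (lam:ℂ))^2)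
      + ((t:ℂ) * (lam:ℂ) / (1 + (lam:ℂ))) * (starRingEnd ℂ) c
      + Complex.I * (y j)
      + (((t:ℂ) * (starRingEnd ℂ) c) / (1 + (lam:ℂ))
          + (t:ℂ)^2 * (lam:ℂ) / (1 + (lam:ℂ))^2) * ζ,
    c + (t:ℂ) * ((lam:ℂ) + ζ) / (1 + (lam:ℂ)))

/-- The quadric `E₀'`. -/
def E0' (m : ℕ) : Set ((Fin (m+1) → ℂ) × ℂ) :=
  {Z | (∀ j : Fin (m+1), (j : ℕ) < m → (Z.1 j).re = 0) ∧
    2 * (Z.1 (Fin.last m)).re = Complex.normSq Z.2}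

open ComplexConjugate

/-!
With `a = t/(1+λ)` the last coordinate of the disc is
`½(|c|² + a²(λ²+1)) + aλc̄ + iy_{n−1} + (ac̄ + a²λ)ζ` and `w = c + a(λ+ζ)`; on `|ζ| = 1` one has
`|λ+ζ|² = λ² + 1 + 2λ Re ζ`, which is exactly what makes `2 Re z_{n−1} = |w|²`.

At `ζ = −λ` the disc takes the value `(iy′, ½|c|² + t²(1−λ)/(2(1+λ)) + iy_{n−1}, c)`, the image of
`(½|c|² + t²(1−λ)/(2(1+λ)), y, c)` under the injective ℝ-linear map `(s, y, c) ↦ (iy + s e_{n−1}, c)`.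
This gives the limit as `λ → 1`, and since `t²(1−λ)/(2(1+λ))` has derivative `−t²/4 ≠ 0` at `λ = 1`,
the differential at `(1, 0, 0)` is injective on the `(n+2)`-dimensional parameter space.
-/

abbrev DiscParam (m : ℕ) : Type := ℝ × (Fin (m+1) → ℝ) × ℂ

lemma two_mul_re_eq_normSq (a lam y : ℝ) (c : ℂ) {ζ : ℂ} (hζ : ‖ζ‖ = 1) :
    2 * ((1/2 : ℂ) * (c * conj c + (a:ℂ)^2 * ((lam:ℂ)^2 + 1)) + (a:ℂ) * lam * conj c
      + I * y + ((a:ℂ) * conj c + (a:ℂ)^2 * lam) * ζ).re = normSq (c + a * (lam + ζ)) := by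
  have hζ' : ζ * conj ζ = 1 := by rw [mul_conj', hζ]; norm_num
  rw [← ofReal_inj, ofReal_mul, re_eq_add_conj, ← mul_conj]
  simp only [map_add, map_mul, map_pow, map_ofNat, map_div₀, map_one, conj_ofReal, conj_I,
    conj_conj, ofReal_ofNat]
  linear_combination (-(a:ℂ) ^ 2) * hζ'

lemma bdisc_mem_E0' {m : ℕ} {t lam : ℝ} (hlam : 1 + lam ≠ 0) (y : Fin (m+1) → ℝ) (c : ℂ)
    {ζ : ℂ} (hζ : ‖ζ‖ = 1) : bdisc m t lam y c ζ ∈ E0' m := by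
  refine ⟨fun j hj => by simp [bdisc, hj], ?_⟩
  have h : (1 + lam : ℂ) ≠ 0 := by exact_mod_cast hlam
  convert two_mul_re_eq_normSq (t / (1 + lam)) lam (y (Fin.last m)) c hζ using 4
  · simp only [bdisc, Fin.val_last, lt_self_iff_false, ↓reduceIte, ofReal_div, ofReal_add,
      ofReal_one]
    field_simp
  · simp only [bdisc, ofReal_div, ofReal_add, ofReal_one, add_right_inj]
    field_simp

@[simps]
def coordEmbedding (m : ℕ) : DiscParam m →ₗ[ℝ] (Fin (m+1) → ℂ) × ℂ where
  toFun v := (fun j => if (j : ℕ) < m then I * v.2.1 j else v.1 + I * v.2.1 j, v.2.2)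
  map_add' v w := by
    refine Prod.ext (funext fun j => ?_) rfl
    dsimp only [Prod.fst_add, Prod.snd_add, Pi.add_apply]
    split_ifs <;> push_cast <;> ring
  map_smul' a v := by
    refine Prod.ext (funext fun j => ?_) rfl
    dsimp only [Prod.smul_fst, Prod.smul_snd, Pi.smul_apply, RingHom.id_apply]
    split_ifs <;> simp only [real_smul, smul_eq_mul, ofReal_mul] <;> ring

lemma coordEmbedding_injective (m : ℕ) : Function.Injective (coordEmbedding m) := by
  rw [← LinearMap.ker_eq_bot, LinearMap.ker_eq_bot']
  rintro ⟨s, y, c⟩ h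
  have hy : ∀ j, y j = 0 := fun j => by
    simpa [apply_ite] using congrArg (fun Z => (Z.1 j).im) h
  have hs : s = 0 := by
    simpa using congrArg (fun Z => (Z.1 (Fin.last m)).re) h
  have hc : c = 0 := by simpa using congrArg Prod.snd h
  simp only [hs, funext hy, hc]
  rfl

def bdiscNegCoords (m : ℕ) (t : ℝ) (P : DiscParam m) : DiscParam m :=
  (‖P.2.2‖ ^ 2 / 2 + t ^ 2 * (1 - P.1) / (2 * (1 + P.1)), P.2)

lemma bdisc_neg_eq_coordEmbedding {m : ℕ} {t lam : ℝ} (hlam : 1 + lam ≠ 0)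
    (y : Fin (m+1) → ℝ) (c : ℂ) :
    bdisc m t lam y c (-lam) = coordEmbedding m (bdiscNegCoords m t (lam, y, c)) := by
  have h : (1 + lam : ℂ) ≠ 0 := by exact_mod_cast hlam
  ext j
  · simp only [bdisc, coordEmbedding_apply, bdiscNegCoords]
    split_ifs
    · rfl
    · push_cast
      rw [mul_conj']
      field_simp
      ring
  · simp [bdisc, bdiscNegCoords]

lemma coordEmbedding_bdiscNegCoords_one (m : ℕ) (t : ℝ) (y : Fin (m+1) → ℝ) (c : ℂ) :
    coordEmbedding m (bdiscNegCoords m t (1, y, c)) =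
      ((fun j : Fin (m+1) => if (j : ℕ) < m then I * (y j)
        else (1/2 : ℂ) * (c * conj c) + I * (y (Fin.last m))), c) := by
  ext j
  · simp only [coordEmbedding_apply, bdiscNegCoords]
    split_ifs with hj
    · rfl
    · rw [Fin.eq_last_of_not_lt hj, mul_conj']
      push_cast
      ring
  · rfl

lemma tendsto_bdisc_neg (m : ℕ) (t : ℝ) (y : Fin (m+1) → ℝ) (c : ℂ) :
    Filter.Tendsto (fun lam : ℝ => bdisc m t lam y c (-(lam:ℂ))) (nhds 1)
      (nhds ((fun j : Fin (m+1) => if (j : ℕ) < m then I * (y j)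
        else (1/2 : ℂ) * (c * conj c) + I * (y (Fin.last m))), c)) := by
  have hcont : ContinuousAt
      (fun lam : ℝ => coordEmbedding m (bdiscNegCoords m t (lam, y, c))) 1 := by
    refine (LinearMap.continuous_of_finiteDimensional _).continuousAt.comp ?_
    unfold bdiscNegCoords
    fun_prop (disch := norm_num)
  rw [← coordEmbedding_bdiscNegCoords_one]
  refine hcont.tendsto.congr' ?_
  filter_upwards [eventually_gt_nhds (show (-1 : ℝ) < 1 by norm_num)] with lam hlam
  exact (bdisc_neg_eq_coordEmbedding (by linarith) y c).symm

def bdiscNegCoordsDeriv (m : ℕ) (t : ℝ) : DiscParam m →L[ℝ] DiscParam m :=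
  ((-(t ^ 2 / 4)) • ContinuousLinearMap.fst ℝ ℝ ((Fin (m+1) → ℝ) × ℂ)).prod
    (ContinuousLinearMap.snd ℝ ℝ ((Fin (m+1) → ℝ) × ℂ))

lemma bdiscNegCoordsDeriv_injective (m : ℕ) {t : ℝ} (ht : t ≠ 0) :
    Function.Injective (bdiscNegCoordsDeriv m t) := by
  rintro ⟨a, v⟩ ⟨b, w⟩ h
  simp only [bdiscNegCoordsDeriv, ContinuousLinearMap.prod_apply, smul_apply,
    ContinuousLinearMap.coe_fst', ContinuousLinearMap.coe_snd', Prod.mk.injEq, smul_eq_mul] at h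
  rw [mul_left_cancel₀ (neg_ne_zero.2 (by positivity)) h.1, h.2]

lemma hasFDerivAt_bdiscNegCoords (m : ℕ) (t : ℝ) :
    HasFDerivAt (bdiscNegCoords m t) (bdiscNegCoordsDeriv m t) (1, 0, 0) := by
  have hr : HasDerivAt (fun lam : ℝ => t ^ 2 * (1 - lam) / (2 * (1 + lam))) (-(t ^ 2 / 4)) 1 := by
    refine ((((hasDerivAt_id' (1:ℝ)).const_sub 1).const_mul (t ^ 2)).fun_div
      (((hasDerivAt_id' (1:ℝ)).const_add 1).const_mul 2) (by norm_num)).congr_deriv ?_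
    norm_num
    ring
  have hnorm := (hasFDerivAt_snd (p := ((1, 0, 0) : DiscParam m))).snd.norm_sq
  refine HasFDerivAt.prodMk ?_ hasFDerivAt_snd
  convert (hnorm.mul_const 2⁻¹).add
    (hr.comp_hasFDerivAt ((1, 0, 0) : DiscParam m) hasFDerivAt_fst) using 1
  · ext P
    simp [div_eq_mul_inv]
  · ext v <;> simp

lemma hasFDerivAt_bdisc_neg (m : ℕ) (t : ℝ) :
    HasFDerivAt (fun P : DiscParam m => bdisc m t P.1 P.2.1 P.2.2 (-(P.1:ℂ)))
      ((coordEmbedding m).toContinuousLinearMap.comp (bdiscNegCoordsDeriv m t)) (1, 0, 0) := by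
  refine ((coordEmbedding m).toContinuousLinearMap.hasFDerivAt.comp _
    (hasFDerivAt_bdiscNegCoords m t)).congr_of_eventuallyEq ?_
  filter_upwards [continuous_fst.continuousAt.eventually
    (eventually_gt_nhds (show (-1 : ℝ) < 1 by norm_num))] with P hP
  exact bdisc_neg_eq_coordEmbedding (by linarith) P.2.1 P.2.2

lemma finrank_range_fderiv_bdisc_neg (m : ℕ) {t : ℝ} (ht : t ≠ 0) :
    Module.finrank ℝ (LinearMap.range (fderiv ℝ
      (fun P : DiscParam m => bdisc m t P.1 P.2.1 P.2.2 (-(P.1:ℂ))) (1, 0, 0)).toLinearMap) =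
      m + 4 := by
  have hinj : Function.Injective
      ((coordEmbedding m).toContinuousLinearMap.comp (bdiscNegCoordsDeriv m t)) :=
    (coordEmbedding_injective m).comp (bdiscNegCoordsDeriv_injective m ht)
  rw [(hasFDerivAt_bdisc_neg m t).fderiv, LinearMap.finrank_range_of_inj hinj]
  simp only [Module.finrank_prod, Module.finrank_self, Module.finrank_fin_fun,
    Complex.finrank_real_complex]
  ring

/-- (i) each disc of the family maps `bΔ` into `E₀'`;
(ii) for `t > 0`, `f(t,λ,y,c)(−λ) → (iy₁,…,iy_{n−2}, ½cc̄ + iy_{n−1}, c) ∈ E₀'`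
as `λ → 1`; (iii) for fixed `t > 0` the differential of
`(λ,y,c) ↦ f(t,λ,y,c)(−λ)` at `(1,0,0)` has rank `n + 2` (`= m + 4`). -/
theorem stmt_18 (m : ℕ) :
    (∀ t lam : ℝ, 0 < t → 0 ≤ lam → lam ≤ 1 → ∀ y : Fin (m+1) → ℝ, ∀ c : ℂ,
      ∀ ζ : ℂ, ‖ζ‖ = 1 → bdisc m t lam y c ζ ∈ E0' m) ∧
    (∀ t : ℝ, 0 < t → ∀ y : Fin (m+1) → ℝ, ∀ c : ℂ,
      Filter.Tendsto (fun lam : ℝ => bdisc m t lam y c (-(lam:ℂ)))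
        (nhdsWithin 1 (Set.Ico 0 1))
        (nhds ((fun j : Fin (m+1) => if (j : ℕ) < m then Complex.I * (y j)
            else (1/2 : ℂ) * (c * (starRingEnd ℂ) c) + Complex.I * (y (Fin.last m)),
          c)))) ∧
    (∀ t : ℝ, 0 < t →
      Module.finrank ℝ
        (LinearMap.range
          ((fderiv ℝ
            (fun P : ℝ × (Fin (m+1) → ℝ) × ℂ =>
              bdisc m t P.1 P.2.1 P.2.2 (-(P.1:ℂ)))
            (1, 0, 0)).toLinearMap)) = m + 4) :=
  ⟨fun _ _ _ hlam _ y c _ hζ => bdisc_mem_E0' (by positivity) y c hζ,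
    fun t _ y c => (tendsto_bdisc_neg m t y c).mono_left nhdsWithin_le_nhds,
    fun _ ht => finrank_range_fderiv_bdisc_neg m ht.ne'⟩
end
end
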